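/- arXiv:2306.13825 — 4 statements merged into one kernel-verified Lean document; each statement's English description precedes it below -/
import Mathlib

section
/- Let n ≥ 1, let Γ ⊆ ℝⁿ be a convex invariant cone and let f be a concave elliptic Hessian operator on Γ. Suppose there is a constant d > 0 such that f(λ + τ) ≥ f(λ) + d·(τ₁⋯τₙ)^{1/n} for all λ ∈ Γ and all τ ∈ Γₙ = (0,∞)ⁿ. Then for every λ ∈ Γ with f(λ) = 1 and every constant C > 0 with Σ_{k=1}^n ∂f/∂λ_k(λ) ≤ C, one has ∂f/∂λᵢ(λ) ≥ 1 / ( (2/d)ⁿ C^{n−1} ) for every i = 1,…,n; in particular f satisfies condition N with constants N₁ = (2/d)ⁿ and N₂ = n−1. -/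
open scoped BigOperators

noncomputable section

/-- The positive orthant `Γₙ = (0,∞)ⁿ` in `ℝⁿ`. -/
def PosOrthant (n : ℕ) : Set (Fin n → ℝ) := {lam | ∀ i, 0 < lam i}

/-- A convex invariant cone: an open cone `Γ ⊆ ℝⁿ` with vertex at the origin, `Γ ≠ ℝⁿ`,
which is convex, satisfies `Γ + Γₙ ⊆ Γ`, and is invariant under permutations of coordinates. -/
def IsConvexInvariantCone {n : ℕ} (Γ : Set (Fin n → ℝ)) : Prop :=
  IsOpen Γ ∧ Γ ≠ Set.univ ∧ Convex ℝ Γ ∧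
    (∀ lam ∈ Γ, ∀ t : ℝ, 0 < t → t • lam ∈ Γ) ∧
    (∀ lam ∈ Γ, ∀ tau ∈ PosOrthant n, lam + tau ∈ Γ) ∧
    (∀ lam ∈ Γ, ∀ σ : Equiv.Perm (Fin n), lam ∘ σ ∈ Γ)

/-- The partial derivative `∂f/∂λᵢ(λ)`. -/
def fpd {n : ℕ} (f : (Fin n → ℝ) → ℝ) (i : Fin n) (lam : Fin n → ℝ) : ℝ :=
  fderiv ℝ f lam (Pi.single i 1)

/-- A concave elliptic Hessian operator on a convex invariant cone `Γ`:
a `C²`, permutation-invariant, concave function `f` on `Γ` which is elliptic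
(`∂f/∂λᵢ > 0`), positive, and positively homogeneous of degree one. -/
def IsConcaveEllipticHessianOp {n : ℕ} (Γ : Set (Fin n → ℝ)) (f : (Fin n → ℝ) → ℝ) : Prop :=
  ContDiffOn ℝ 2 f Γ ∧ ConcaveOn ℝ Γ f ∧
    (∀ lam ∈ Γ, ∀ σ : Equiv.Perm (Fin n), f (lam ∘ σ) = f lam) ∧
    (∀ lam ∈ Γ, ∀ i, 0 < fpd f i lam) ∧
    (∀ lam ∈ Γ, 0 < f lam) ∧
    (∀ lam ∈ Γ, ∀ t : ℝ, 0 < t → f (t • lam) = t * f lam)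

/-- Condition N: whenever `λ ∈ Γ` satisfies `f(λ) = 1` and `Σᵢ ∂f/∂λᵢ(λ) ≤ C` for some `C > 0`,
then `∂f/∂λᵢ(λ) ≥ 1/(N₁ C^{N₂})` for every `i`. -/
def ConditionN {n : ℕ} (Γ : Set (Fin n → ℝ)) (f : (Fin n → ℝ) → ℝ) (N₁ N₂ : ℝ) : Prop :=
  ∀ lam ∈ Γ, f lam = 1 → ∀ C : ℝ, 0 < C → (∑ i, fpd f i lam) ≤ C →
    ∀ i, 1 / (N₁ * C ^ N₂) ≤ fpd f i lam

/-- The Hessian matrix `D²u(x)`. -/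
def hessianMatrix {n : ℕ} (u : EuclideanSpace ℝ (Fin n) → ℝ) (x : EuclideanSpace ℝ (Fin n)) :
    Matrix (Fin n) (Fin n) ℝ :=
  fun i j => iteratedFDeriv ℝ 2 u x ![EuclideanSpace.single i 1, EuclideanSpace.single j 1]

/-- The vector of eigenvalues `λ(D²u(x))` of the Hessian of `u` at `x`
(junk value `0` if the Hessian matrix fails to be symmetric). -/
def hessEigen {n : ℕ} (u : EuclideanSpace ℝ (Fin n) → ℝ) (x : EuclideanSpace ℝ (Fin n)) :
    Fin n → ℝ :=
  if h : (hessianMatrix u x).IsHermitian then h.eigenvalues else 0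

/-- Condition D for a solution `u` of `F(D²u) = 1` on a set `Ω`: at every point, if an
eigenvalue `λᵢ` of `D²u` exceeds `D₁` then `∂f/∂λᵢ(λ) ⬝ λᵢ ≤ D₂`. -/
def ConditionD {n : ℕ} (f : (Fin n → ℝ) → ℝ) (u : EuclideanSpace ℝ (Fin n) → ℝ)
    (Ω : Set (EuclideanSpace ℝ (Fin n))) (D₁ D₂ : ℝ) : Prop :=
  ∀ x ∈ Ω, ∀ i, D₁ < hessEigen u x i →
    fpd f i (hessEigen u x) * hessEigen u x i ≤ D₂

/-- The `k`-th elementary symmetric polynomial `σ_k` on `ℝⁿ`. -/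
def esymmF (n k : ℕ) (lam : Fin n → ℝ) : ℝ :=
  ∑ s ∈ (Finset.univ : Finset (Fin n)).powersetCard k, ∏ i ∈ s, lam i

/-- The Gårding cone `Γ_k = {λ : σ_j(λ) > 0, j = 1,…,k}`. -/
def GammaK (n k : ℕ) : Set (Fin n → ℝ) :=
  {lam | ∀ j : ℕ, 1 ≤ j → j ≤ k → 0 < esymmF n j lam}

/-- The cone `Γ̂_p` of vectors all of whose sums of `p` distinct coordinates are positive. -/
def GammaHat (n p : ℕ) : Set (Fin n → ℝ) :=
  {lam | ∀ s : Finset (Fin n), s.card = p → 0 < ∑ i ∈ s, lam i}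

/-- The `p`-Monge–Ampère operator `M_p(λ) = ∏_{i₁<⋯<i_p} (λ_{i₁} + ⋯ + λ_{i_p})`. -/
def pMA (n p : ℕ) (lam : Fin n → ℝ) : ℝ :=
  ∏ s ∈ (Finset.univ : Finset (Fin n)).powersetCard p, ∑ i ∈ s, lam i

/-- Quadratic growth: `u(x) ≥ C⁻¹|x|² − C` for some `C > 0`. -/
def QuadraticGrowth {n : ℕ} (u : EuclideanSpace ℝ (Fin n) → ℝ) : Prop :=
  ∃ C : ℝ, 0 < C ∧ ∀ x, C⁻¹ * ‖x‖ ^ 2 - C ≤ u x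

/-- `u` is a quadratic polynomial: `u(x) = ½ xᵀAx + b·x + c` with `A` symmetric. -/
def IsQuadraticPolynomial {n : ℕ} (u : EuclideanSpace ℝ (Fin n) → ℝ) : Prop :=
  ∃ (A : Matrix (Fin n) (Fin n) ℝ) (b : Fin n → ℝ) (c : ℝ), A.IsSymm ∧
    ∀ x, u x = (1 / 2) * (∑ i, ∑ j, A i j * x i * x j) + (∑ i, b i * x i) + c

/-!
By concavity `f(λ + τ) - f(λ) ≤ τ ⬝ ∇f(λ)`, so domination gives `d (τ₁⋯τₙ)^{1/n} ≤ τ ⬝ ∇f(λ)`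
for every `τ ∈ Γₙ`. Testing this with `τ = (1, …, 1, t, 1, …, 1)`, where `t = (2C/d)ⁿ` sits in
the `i`-th slot, gives `2C ≤ ∑ₖ ∂ₖf(λ) + (t - 1) ∂ᵢf(λ) ≤ C + t ∂ᵢf(λ)`, that is
`∂ᵢf(λ) ≥ C/t = 1/((2/d)ⁿ Cⁿ⁻¹)`.
-/

theorem ConcaveOn.le_add_fderiv_sub {E : Type*} [NormedAddCommGroup E] [NormedSpace ℝ E]
    {s : Set E} {f : E → ℝ} (hf : ConcaveOn ℝ s f) {x y : E} (hx : x ∈ s) (hy : y ∈ s)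
    (hfx : DifferentiableAt ℝ f x) :
    f y ≤ f x + fderiv ℝ f x (y - x) := by
  let L := AffineMap.lineMap (k := ℝ) x y
  have hL : HasDerivAt (f ∘ L) (fderiv ℝ f x (y - x)) 0 := by
    refine HasFDerivAt.comp_hasDerivAt (0 : ℝ) ?_ AffineMap.hasDerivAt_lineMap
    simpa [L] using hfx.hasFDerivAt
  have hslope := (hf.comp_affineMap L).slope_le_of_hasDerivAt
    (by simpa [L] using hx) (by simpa [L] using hy) zero_lt_one hL
  simp only [slope_def_field, Function.comp_apply, L, AffineMap.lineMap_apply_zero,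
    AffineMap.lineMap_apply_one, sub_zero, div_one] at hslope
  linarith

theorem fderiv_apply_eq_dotProduct_fpd {n : ℕ} (f : (Fin n → ℝ) → ℝ) (x v : Fin n → ℝ) :
    fderiv ℝ f x v = v ⬝ᵥ fun k => fpd f k x := by
  conv_lhs => rw [pi_eq_sum_univ' v]
  simp only [map_sum, map_smul, smul_eq_mul, dotProduct, fpd]

theorem one_div_le_of_geomMean_le_dotProduct {n : ℕ} {g : Fin n → ℝ} {d C : ℝ}
    (hd : 0 < d) (hC : 0 < C) (hsum : ∑ k, g k ≤ C)
    (hdom : ∀ tau ∈ PosOrthant n, d * (∏ k, tau k) ^ (1 / (n : ℝ)) ≤ tau ⬝ᵥ g)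
    {i : Fin n} (hgi : 0 ≤ g i) :
    1 / ((2 / d) ^ n * C ^ (n - 1)) ≤ g i := by
  have hn : n ≠ 0 := i.pos.ne'
  set t := (2 * C / d) ^ n with ht
  have htpos : 0 < t := by positivity
  let tau : Fin n → ℝ := 1 + Pi.single i (t - 1)
  have htau : tau ∈ PosOrthant n := fun k => by
    by_cases hk : k = i
    · subst hk; simpa [tau] using htpos
    · simp [tau, hk]
  have hprod : ∏ k, tau k = t := by
    rw [Fintype.prod_eq_single i fun k hk => by simp [tau, hk]]
    simp [tau]
  have hroot : t ^ (1 / (n : ℝ)) = 2 * C / d := by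
    rw [ht, ← Real.rpow_natCast, ← Real.rpow_mul (by positivity),
      mul_one_div_cancel (by exact_mod_cast hn), Real.rpow_one]
  have hdot : tau ⬝ᵥ g = ∑ k, g k + (t - 1) * g i := by
    simp [tau, add_dotProduct, one_dotProduct, single_dotProduct]
  have key := hdom tau htau
  rw [hprod, hroot, hdot, mul_div_cancel₀ _ hd.ne'] at key
  have ht' : t = (2 / d) ^ n * C ^ (n - 1) * C := by
    rw [ht, mul_assoc, pow_sub_one_mul hn, ← mul_pow, div_mul_eq_mul_div]
  calc 1 / ((2 / d) ^ n * C ^ (n - 1)) = C / t := by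
        rw [ht', div_mul_cancel_right₀ hC.ne', one_div]
    _ ≤ g i := (div_le_iff₀ htpos).2 (by linarith [sub_one_mul t (g i)])

theorem domination_implies_condition_N_general (n : ℕ)
    (Γ : Set (Fin n → ℝ)) (f : (Fin n → ℝ) → ℝ)
    (hΓ : IsConvexInvariantCone Γ) (hf : IsConcaveEllipticHessianOp Γ f)
    (d : ℝ) (hd : 0 < d)
    (hdom : ∀ lam ∈ Γ, ∀ tau ∈ PosOrthant n,
      f lam + d * (∏ i, tau i) ^ (1 / (n : ℝ)) ≤ f (lam + tau)) :
    (∀ lam ∈ Γ, f lam = 1 → ∀ C : ℝ, 0 < C → (∑ k, fpd f k lam) ≤ C →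
      ∀ i, 1 / ((2 / d) ^ n * C ^ (n - 1)) ≤ fpd f i lam) ∧
    ConditionN Γ f ((2 / d) ^ n) ((n : ℝ) - 1) := by
  obtain ⟨hopen, -, -, -, hadd, -⟩ := hΓ
  obtain ⟨hsmooth, hconc, -, hell, -, -⟩ := hf
  have hN : ∀ lam ∈ Γ, ∀ C : ℝ, 0 < C → (∑ k, fpd f k lam) ≤ C →
      ∀ i, 1 / ((2 / d) ^ n * C ^ (n - 1)) ≤ fpd f i lam := by
    intro lam hlam C hC hsum i
    have hdiff : DifferentiableAt ℝ f lam :=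
      (hsmooth.contDiffAt (hopen.mem_nhds hlam)).differentiableAt two_ne_zero
    refine one_div_le_of_geomMean_le_dotProduct hd hC hsum (fun tau htau => ?_) (hell lam hlam i).le
    have hgrad := hconc.le_add_fderiv_sub hlam (hadd lam hlam tau htau) hdiff
    rw [add_sub_cancel_left, fderiv_apply_eq_dotProduct_fpd] at hgrad
    linarith [hdom lam hlam tau htau]
  refine ⟨fun lam hlam _ => hN lam hlam, fun lam hlam _ C hC hsum i => ?_⟩
  rw [← Nat.cast_pred i.pos, Real.rpow_natCast]
  exact hN lam hlam C hC hsum i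

/-- **Proposition (domination implies condition N).** If a concave elliptic Hessian operator
`f` on a convex invariant cone `Γ` satisfies `f(λ+τ) ≥ f(λ) + d (τ₁⋯τₙ)^{1/n}` for all
`λ ∈ Γ`, `τ ∈ Γₙ`, then for every `λ ∈ Γ` with `f(λ) = 1` and every `C > 0` with
`Σ_k ∂f/∂λ_k(λ) ≤ C` one has `∂f/∂λᵢ(λ) ≥ 1/((2/d)ⁿ C^{n−1})` for every `i`;
in particular `f` satisfies condition N with `N₁ = (2/d)ⁿ` and `N₂ = n−1`. -/
theorem domination_implies_condition_N (n : ℕ) (hn : 1 ≤ n)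
    (Γ : Set (Fin n → ℝ)) (f : (Fin n → ℝ) → ℝ)
    (hΓ : IsConvexInvariantCone Γ) (hf : IsConcaveEllipticHessianOp Γ f)
    (d : ℝ) (hd : 0 < d)
    (hdom : ∀ lam ∈ Γ, ∀ tau ∈ PosOrthant n,
      f lam + d * (∏ i, tau i) ^ (1 / (n : ℝ)) ≤ f (lam + tau)) :
    (∀ lam ∈ Γ, f lam = 1 → ∀ C : ℝ, 0 < C → (∑ k, fpd f k lam) ≤ C →
      ∀ i, 1 / ((2 / d) ^ n * C ^ (n - 1)) ≤ fpd f i lam) ∧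
    ConditionN Γ f ((2 / d) ^ n) ((n : ℝ) - 1) :=
  domination_implies_condition_N_general n Γ f hΓ hf d hd hdom
end
end

section
/- Let n ≥ 1, let Γ ⊆ ℝⁿ be a convex invariant cone and let f be a concave elliptic Hessian operator on Γ. Let λ ∈ Γ with f(λ) = 1, let R > 0 and let i ∈ {1,…,n} be such that the vector obtained from λ by replacing its i-th coordinate with R belongs to Γ. If λᵢ ≥ 2R, then ∂f/∂λᵢ(λ) · λᵢ ≤ 2. Consequently, if an admissible function u satisfies F(D²u) = 1 and condition CNS with parameter R, then u satisfies condition D with constants D₁ = 2R and D₂ = 2. -/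
open scoped BigOperators

noncomputable section

/-- Condition CNS with parameter `R`: at every point, replacing any single eigenvalue of the
Hessian by `R` keeps the vector of eigenvalues in `Γ`. -/
def ConditionCNS {n : ℕ} (Γ : Set (Fin n → ℝ)) (u : EuclideanSpace ℝ (Fin n) → ℝ)
    (Ω : Set (EuclideanSpace ℝ (Fin n))) (R : ℝ) : Prop :=
  ∀ x ∈ Ω, ∀ i : Fin n, Function.update (hessEigen u x) i R ∈ Γ

/-!
Concavity of `f` along the segment from `λ` to `μ = λ` with `λᵢ` replaced by `R` gives
`0 < f(μ) ≤ f(λ) + ∂ᵢf(λ) (R - λᵢ)`, i.e. `∂ᵢf(λ) (λᵢ - R) < f(λ)`. When `λᵢ ≥ 2R` the left side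
is at least `∂ᵢf(λ) λᵢ / 2` because `∂ᵢf(λ) > 0`, so `∂ᵢf(λ) λᵢ < 2 f(λ) = 2`. The tangent
inequality needs only differentiability at `λ`, which ellipticity already forces: `fderiv`
vanishes wherever `f` is not differentiable.
-/

open Function

theorem ConcaveOn.le_add_of_hasFDerivAt {E : Type*} [NormedAddCommGroup E] [NormedSpace ℝ E]
    {s : Set E} {f : E → ℝ} {f' : E →L[ℝ] ℝ} {x y : E} (hf : ConcaveOn ℝ s f)
    (hx : x ∈ s) (hy : y ∈ s) (hf' : HasFDerivAt f f' x) :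
    f y ≤ f x + f' (y - x) := by
  let L : ℝ →ᵃ[ℝ] E := AffineMap.lineMap x y
  have hf'L : HasFDerivAt f f' (L 0) := by simpa [L] using hf'
  have hfL : HasDerivAt (f ∘ L) (f' (y - x)) 0 :=
    hf'L.comp_hasDerivAt 0 AffineMap.hasDerivAt_lineMap
  have hslope := (hf.comp_affineMap L).slope_le_of_hasDerivAt (by simpa [L] using hx)
    (by simpa [L] using hy) one_pos hfL
  simp only [slope, comp_apply, L, AffineMap.lineMap_apply_zero, AffineMap.lineMap_apply_one,
    sub_zero, inv_one, one_smul, vsub_eq_sub] at hslope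
  linarith

section HessianOperator

variable {n : ℕ} {Γ : Set (Fin n → ℝ)} {f : (Fin n → ℝ) → ℝ} {i : Fin n} {lam : Fin n → ℝ}
  {r : ℝ}

theorem differentiableAt_of_fpd_ne_zero (h : fpd f i lam ≠ 0) : DifferentiableAt ℝ f lam := by
  by_contra hd
  exact h (by simp [fpd, fderiv_zero_of_not_differentiableAt hd])

theorem update_sub_self (lam : Fin n → ℝ) (i : Fin n) (r : ℝ) :
    update lam i r - lam = (r - lam i) • Pi.single i 1 := by
  ext j
  rcases eq_or_ne j i with rfl | hj <;> simp [*]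

theorem fpd_mul_sub_lt (hf : ConcaveOn ℝ Γ f) (hlam : lam ∈ Γ) (hr : update lam i r ∈ Γ)
    (hd : DifferentiableAt ℝ f lam) (hpos : 0 < f (update lam i r)) :
    fpd f i lam * (lam i - r) < f lam := by
  have := hf.le_add_of_hasFDerivAt hlam hr hd.hasFDerivAt
  rw [update_sub_self, map_smul, smul_eq_mul] at this
  rw [fpd]
  linarith

theorem fpd_mul_lt_two_mul (hf : ConcaveOn ℝ Γ f) (hlam : lam ∈ Γ) (hr : update lam i r ∈ Γ)
    (hell : 0 < fpd f i lam) (hpos : 0 < f (update lam i r)) (hri : 2 * r ≤ lam i) :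
    fpd f i lam * lam i < 2 * f lam := by
  have := fpd_mul_sub_lt hf hlam hr (differentiableAt_of_fpd_ne_zero hell.ne') hpos
  nlinarith [mul_le_mul_of_nonneg_left hri hell.le]

end HessianOperator

theorem cns_implies_D_general (n : ℕ)
    (Γ : Set (Fin n → ℝ)) (f : (Fin n → ℝ) → ℝ)
    (hf : IsConcaveEllipticHessianOp Γ f) :
    (∀ lam ∈ Γ, f lam = 1 → ∀ R : ℝ, 0 < R → ∀ i : Fin n,
      Function.update lam i R ∈ Γ → 2 * R ≤ lam i → fpd f i lam * lam i ≤ 2) ∧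
    (∀ R : ℝ, 0 < R →
      ∀ (Ω : Set (EuclideanSpace ℝ (Fin n))) (u : EuclideanSpace ℝ (Fin n) → ℝ),
        (∀ x ∈ Ω, hessEigen u x ∈ Γ) →
        (∀ x ∈ Ω, f (hessEigen u x) = 1) →
        ConditionCNS Γ u Ω R →
        ConditionD f u Ω (2 * R) 2) := by
  obtain ⟨-, hconc, -, hell, hpos, -⟩ := hf
  have pointwise : ∀ lam ∈ Γ, f lam = 1 → ∀ R : ℝ, 0 < R → ∀ i : Fin n,
      update lam i R ∈ Γ → 2 * R ≤ lam i → fpd f i lam * lam i ≤ 2 := by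
    intro lam hlam hf1 R _ i hR hRi
    have := fpd_mul_lt_two_mul hconc hlam hR (hell lam hlam i) (hpos _ hR) hRi
    linarith
  refine ⟨pointwise, fun R hR Ω u hadm hsol hcns x hx i hlt => ?_⟩
  exact pointwise _ (hadm x hx) (hsol x hx) R hR i (hcns x hx i) hlt.le

/-- **Proposition (condition CNS implies condition D).** If `λ ∈ Γ`, `f(λ) = 1`, `R > 0`,
and the vector obtained from `λ` by replacing its `i`-th coordinate with `R` lies in `Γ`,
then `λᵢ ≥ 2R` implies `∂f/∂λᵢ(λ)·λᵢ ≤ 2`. Consequently, an admissible solution of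
`F(D²u) = 1` satisfying condition CNS with parameter `R` satisfies condition D with
`D₁ = 2R` and `D₂ = 2`. -/
theorem cns_implies_D (n : ℕ) (hn : 1 ≤ n)
    (Γ : Set (Fin n → ℝ)) (f : (Fin n → ℝ) → ℝ)
    (hΓ : IsConvexInvariantCone Γ) (hf : IsConcaveEllipticHessianOp Γ f) :
    (∀ lam ∈ Γ, f lam = 1 → ∀ R : ℝ, 0 < R → ∀ i : Fin n,
      Function.update lam i R ∈ Γ → 2 * R ≤ lam i → fpd f i lam * lam i ≤ 2) ∧
    (∀ R : ℝ, 0 < R →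
      ∀ (Ω : Set (EuclideanSpace ℝ (Fin n))) (u : EuclideanSpace ℝ (Fin n) → ℝ),
        (∀ x ∈ Ω, hessEigen u x ∈ Γ) →
        (∀ x ∈ Ω, f (hessEigen u x) = 1) →
        ConditionCNS Γ u Ω R →
        ConditionD f u Ω (2 * R) 2) :=
  cns_implies_D_general n Γ f hf
end
end

section
/- Let n ≥ 2, 1 ≤ k ≤ n−1 and A > 0. Suppose λ = (λ₁,…,λₙ) ∈ Γ_k ⊆ ℝⁿ satisfies σ_{k+1}(λ) > −A·σ_k(λ). Then for every R > A, the vector (λ₁,…,λ_{n−1}, R) belongs to Γ_k; by permutation invariance of Γ_k, the same holds when any single coordinate of λ is replaced by R. -/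
/-! Deleting the coordinate `λᵢ` splits `σ_{j+1}(λ) = σ_{j+1}(λ') + λᵢ σ_j(λ')`. Newton's inequality
`σ_{j-1} σ_{j+1} ≤ σ_j²` (differentiating `∏ (X - λᵢ)` preserves the normalized means
`σ_j / C(n, j)`, which reduces it to `n = j + 2`, where passing to reciprocals turns it into
Cauchy–Schwarz) then shows inductively that `λ' ∈ Γ_{k-1}`. With `a = σ_{k-1}(λ') > 0`,
`b = σ_k(λ')`, the hypothesis and Newton's inequality give `(b + A a)(b + λᵢ a) > 0`; since
`b + λᵢ a = σ_k(λ) > 0`, the new `σ_k = b + R a` exceeds `b + A a > 0`. -/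

open scoped BigOperators

noncomputable section

namespace Multiset

section CommSemiring

variable {R : Type*} [CommSemiring R]

theorem esymm_zero (s : Multiset R) : s.esymm 0 = 1 := by
  simp [esymm, powersetCard_zero_left]

theorem esymm_eq_zero_of_card_lt {s : Multiset R} {j : ℕ} (h : card s < j) : s.esymm j = 0 := by
  simp [esymm, powersetCard_eq_empty j h]

theorem esymm_card (s : Multiset R) : s.esymm (card s) = s.prod := by
  simp [esymm, powersetCard_self]

theorem esymm_one (s : Multiset R) : s.esymm 1 = s.sum := by
  simp [esymm, powersetCard_one]

theorem esymm_cons_succ (a : R) (s : Multiset R) (j : ℕ) :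
    (a ::ₘ s).esymm (j + 1) = s.esymm (j + 1) + a * s.esymm j := by
  simp [esymm, powersetCard_cons, map_map, sum_map_mul_left]

end CommSemiring

theorem two_mul_esymm_two {R : Type*} [CommRing R] (s : Multiset R) :
    2 * s.esymm 2 = s.sum ^ 2 - (s.map (· ^ 2)).sum := by
  induction s using Multiset.induction_on with
  | empty => rw [esymm_eq_zero_of_card_lt (by simp)]; simp
  | cons a s ih =>
    rw [esymm_cons_succ, esymm_one, sum_cons, map_cons, sum_cons]
    linear_combination ih

theorem sq_sum_le_card_mul_sum_sq {R : Type*} [CommRing R] [LinearOrder R] [IsStrictOrderedRing R]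
    (s : Multiset R) : s.sum ^ 2 ≤ card s * (s.map (· ^ 2)).sum := by
  classical
  have h := _root_.sq_sum_le_card_mul_sum_sq (s := s.toEnumFinset) (f := Prod.fst)
  rwa [Finset.sum_eq_multiset_sum, Finset.sum_eq_multiset_sum,
    show (fun x : R × ℕ => x.1 ^ 2) = (· ^ 2) ∘ Prod.fst from rfl, ← map_map,
    map_toEnumFinset_fst, card_toEnumFinset] at h

theorem prod_mul_esymm_map_inv {K : Type*} [Field K] {s : Multiset K} (hs : ∀ a ∈ s, a ≠ 0)
    {i j : ℕ} (hij : i + j = card s) : s.prod * (s.map (·⁻¹)).esymm i = s.esymm j := by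
  induction s using Multiset.induction_on generalizing i j with
  | empty =>
    obtain ⟨rfl, rfl⟩ : i = 0 ∧ j = 0 := by simpa using hij
    simp [esymm_zero]
  | cons a s ih =>
    have ha : a ≠ 0 := hs a (mem_cons_self a s)
    have ih' := fun {i j : ℕ} (h : i + j = card s) => ih (fun b hb => hs b (mem_cons_of_mem hb)) h
    rw [card_cons] at hij
    rcases i with _ | i
    · rw [esymm_zero, mul_one, show j = card (a ::ₘ s) by simp; omega, esymm_card]
    rw [map_cons, esymm_cons_succ, prod_cons]
    rcases j with _ | j
    · have h := ih' (i := i) (j := 0) (by omega)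
      rw [esymm_zero] at h
      rw [esymm_eq_zero_of_card_lt (by simp; omega), esymm_zero, zero_add,
        mul_mul_mul_comm, mul_inv_cancel₀ ha, one_mul, h]
    · rw [esymm_cons_succ, ← ih' (i := i + 1) (j := j) (by omega),
        ← ih' (i := i) (j := j + 1) (by omega)]
      field_simp
      ring

theorem two_mul_card_mul_esymm_two_le (s : Multiset ℝ) :
    2 * card s * s.esymm 2 ≤ (card s - 1) * s.esymm 1 ^ 2 := by
  have h := sq_sum_le_card_mul_sum_sq s
  rw [mul_right_comm, two_mul_esymm_two, esymm_one]
  linarith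

theorem esymm_newton_of_card_eq {s : Multiset ℝ} {k : ℕ} (hs : card s = k + 2) :
    ((card s : ℝ) - k) * (k + 2) * (s.esymm k * s.esymm (k + 2)) ≤
      (k + 1) * (card s - k - 1) * s.esymm (k + 1) ^ 2 := by
  have hcard : (card s : ℝ) = k + 2 := by exact_mod_cast hs
  rw [hcard, ← hs, esymm_card]
  by_cases hz : (0 : ℝ) ∈ s
  · rw [prod_eq_zero hz, mul_zero, mul_zero]
    nlinarith [sq_nonneg (s.esymm (k + 1))]
  · replace hz : ∀ a ∈ s, a ≠ 0 := fun a ha h => hz (h ▸ ha)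
    have hinv := two_mul_card_mul_esymm_two_le (s.map (·⁻¹))
    rw [card_map, hcard] at hinv
    rw [← prod_mul_esymm_map_inv hz (i := 2) (by omega),
      ← prod_mul_esymm_map_inv hz (i := 1) (by omega)]
    nlinarith [sq_nonneg s.prod]

open Polynomial in
theorem exists_esymm_roots_derivative {s : Multiset ℝ} {n : ℕ} (hs : card s = n + 1) :
    ∃ t : Multiset ℝ, card t = n ∧
      ∀ i ≤ n, (n + 1 : ℝ) * t.esymm i = (n + 1 - i) * s.esymm i := by
  set P : ℝ[X] := (s.map fun a => X - C a).prod
  have hPdeg : P.natDegree = n + 1 := by rw [natDegree_multiset_prod_X_sub_C_eq_card, hs]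
  have hProots : P.roots = s := roots_multiset_prod_X_sub_C s
  have hPmonic : P.Monic := monic_multiset_prod_of_monic _ _ fun a _ => monic_X_sub_C a
  have hdeg : (derivative P).natDegree = n := by rw [natDegree_derivative, hPdeg]; rfl
  have hroots : card (derivative P).roots = (derivative P).natDegree := by
    have hRolle := card_roots_le_derivative P
    have hle := (derivative P).card_roots'
    rw [hProots, hs] at hRolle
    omega
  have hlead : (derivative P).leadingCoeff = n + 1 := by
    rw [leadingCoeff, hdeg, coeff_derivative, ← hPdeg, hPmonic.coeff_natDegree, one_mul]
  refine ⟨(derivative P).roots, hroots.trans hdeg, fun i hi => ?_⟩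
  have hcoeff := coeff_derivative P (n - i)
  rw [coeff_eq_esymm_roots_of_card hroots (by omega), coeff_eq_esymm_roots_of_card
    (by rw [hProots, hPdeg, hs]) (by omega), hlead, hdeg, hPdeg, hPmonic.leadingCoeff, hProots,
    show n - (n - i) = i by omega, show n + 1 - (n - i + 1) = i by omega,
    Nat.cast_sub hi] at hcoeff
  have hsign : ((-1 : ℝ) ^ i) ≠ 0 := pow_ne_zero _ (by norm_num)
  apply mul_left_cancel₀ hsign
  linear_combination hcoeff

/-- Newton's inequality `E_k E_{k+2} ≤ E_{k+1}²` for `E_j = σ_j / C(n, j)`, binomials cleared. -/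
theorem esymm_newton (s : Multiset ℝ) (k : ℕ) :
    ((card s : ℝ) - k) * (k + 2) * (s.esymm k * s.esymm (k + 2)) ≤
      (k + 1) * (card s - k - 1) * s.esymm (k + 1) ^ 2 := by
  rcases lt_or_ge (card s) (k + 2) with hs | hs
  · rw [esymm_eq_zero_of_card_lt hs, mul_zero, mul_zero]
    rcases Nat.lt_succ_iff_lt_or_eq.1 hs with hs' | hs'
    · simp [esymm_eq_zero_of_card_lt hs']
    · simp [hs']
  obtain ⟨n, hn, hsn⟩ : ∃ n, k + 2 ≤ n ∧ card s = n := ⟨_, hs, rfl⟩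
  induction n, hn using Nat.le_induction generalizing s with
  | base => exact esymm_newton_of_card_eq hsn
  | succ n hn ih =>
    obtain ⟨t, ht, hts⟩ := exists_esymm_roots_derivative hsn
    have iht := ih t (by omega) ht
    rw [ht] at iht
    rw [hsn]
    push_cast
    have h0 := hts k (by omega)
    have h1 := hts (k + 1) (by omega)
    have h2 := hts (k + 2) (by omega)
    push_cast at h0 h1 h2
    have e1 : ((n : ℝ) + 1) ^ 2 * (t.esymm k * t.esymm (k + 2)) =
        (n + 1 - k) * (n - 1 - k) * (s.esymm k * s.esymm (k + 2)) := by
      linear_combination ((n : ℝ) + 1) * t.esymm (k + 2) * h0 + (n + 1 - k) * s.esymm k * h2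
    have e2 : ((n : ℝ) + 1) ^ 2 * t.esymm (k + 1) ^ 2 = (n - k) ^ 2 * s.esymm (k + 1) ^ 2 := by
      linear_combination ((n : ℝ) + 1) * t.esymm (k + 1) * h1 + (n - k) * s.esymm (k + 1) * h1
    have hnk : (k : ℝ) + 2 ≤ n := by exact_mod_cast hn
    have hpos : (0 : ℝ) < (n - k) * (n - k - 1) := by nlinarith
    refine le_of_mul_le_mul_left ?_ hpos
    linear_combination ((n : ℝ) + 1) ^ 2 * iht - (n - k) * (k + 2) * e1 + (k + 1) * (n - k - 1) * e2

theorem esymm_mul_esymm_le_sq (s : Multiset ℝ) (k : ℕ) :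
    s.esymm k * s.esymm (k + 2) ≤ s.esymm (k + 1) ^ 2 := by
  rcases lt_or_ge (card s) (k + 2) with hs | hs
  · rw [esymm_eq_zero_of_card_lt hs, mul_zero]
    positivity
  have hnewton := esymm_newton s k
  have hk : (k : ℝ) + 2 ≤ card s := by exact_mod_cast hs
  by_contra! hlt
  have hp : 0 < s.esymm k * s.esymm (k + 2) := (sq_nonneg _).trans_lt hlt
  have hc : (0 : ℝ) ≤ (k + 1) * (card s - k - 1) := by nlinarith
  nlinarith [mul_le_mul_of_nonneg_left hlt.le hc]

theorem esymm_pos_of_cons_esymm_pos {a : ℝ} {s : Multiset ℝ} {k : ℕ}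
    (h : ∀ j ≤ k, 0 < (a ::ₘ s).esymm j) : ∀ j < k, 0 < s.esymm j := by
  induction k with
  | zero => intro j hj; omega
  | succ k ih =>
    have ih := ih fun j hj => h j (by omega)
    intro j hj
    rcases Nat.lt_succ_iff_lt_or_eq.1 hj with hj | rfl
    · exact ih j hj
    rcases j with _ | m
    · simp [esymm_zero]
    have ha := ih m (by omega)
    have h1 := h (m + 1) (by omega)
    have h2 := h (m + 2) le_rfl
    rw [esymm_cons_succ] at h1 h2
    have hN := esymm_mul_esymm_le_sq s m
    by_contra! hb
    -- `σ_{m+1}(s) ≤ 0` would force `σ_m σ_{m+2} > σ_{m+1}²` on `s`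
    nlinarith [mul_lt_mul_of_pos_left (show -(a * s.esymm (m + 1)) < s.esymm (m + 2) by linarith) ha,
      mul_le_mul_of_nonneg_right (show -s.esymm (m + 1) ≤ a * s.esymm m by linarith)
        (neg_nonneg.2 hb)]

theorem esymm_cons_replace_pos {a A R : ℝ} {s : Multiset ℝ} {k : ℕ}
    (h : ∀ j ≤ k, 0 < (a ::ₘ s).esymm j) (hsig : -A * (a ::ₘ s).esymm k < (a ::ₘ s).esymm (k + 1))
    (hA : 0 < A) (hR : A < R) : ∀ j ≤ k, 0 < (R ::ₘ s).esymm j := by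
  have hdel := esymm_pos_of_cons_esymm_pos h
  rintro (_ | j) hj
  · simp [esymm_zero]
  rw [esymm_cons_succ]
  have ha := hdel j (by omega)
  rcases Nat.lt_or_ge (j + 1) k with hlt | hge
  · exact add_pos (hdel (j + 1) hlt) (mul_pos (hA.trans hR) ha)
  obtain rfl : k = j + 1 := by omega
  have hk := h (j + 1) le_rfl
  rw [esymm_cons_succ] at hk
  rw [esymm_cons_succ, esymm_cons_succ] at hsig
  have hN := esymm_mul_esymm_le_sq s j
  have hprod : 0 < (s.esymm (j + 1) + A * s.esymm j) * (s.esymm (j + 1) + a * s.esymm j) := by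
    nlinarith [mul_pos ha (show 0 < s.esymm (j + 2) + a * s.esymm (j + 1) +
      A * (s.esymm (j + 1) + a * s.esymm j) by linarith)]
  have hA' := (pos_iff_pos_of_mul_pos hprod).2 hk
  nlinarith [mul_lt_mul_of_pos_right hR ha]

end Multiset

theorem Finset.univ_val_map_update {ι α : Type*} [Fintype ι] [DecidableEq ι] (f : ι → α) (i : ι)
    (x : α) : univ.val.map (Function.update f i x) = x ::ₘ (univ.val.erase i).map f := by
  conv_lhs => rw [← Multiset.cons_erase (mem_univ i)]
  rw [Multiset.map_cons, Function.update_self]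
  congr 1
  refine Multiset.map_congr rfl fun j hj => Function.update_of_ne ?_ x f
  exact ((Multiset.Nodup.mem_erase_iff univ.nodup).1 hj).1

theorem esymmF_eq_esymm (n j : ℕ) (lam : Fin n → ℝ) :
    esymmF n j lam = (Finset.univ.val.map lam).esymm j :=
  (Finset.esymm_map_val lam _ j).symm

theorem mem_gammaK_iff {n k : ℕ} {lam : Fin n → ℝ} :
    lam ∈ GammaK n k ↔ ∀ j ≤ k, 0 < (Finset.univ.val.map lam).esymm j := by
  simp only [GammaK, Set.mem_ofPred_eq, esymmF_eq_esymm]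
  refine ⟨fun h j hj => ?_, fun h j _ hj => h j hj⟩
  rcases j with _ | j
  · simp [Multiset.esymm_zero]
  · exact h _ (by omega) hj

/-- **Proposition.** If `λ ∈ Γ_k` satisfies `σ_{k+1}(λ) > −A σ_k(λ)` then for every `R > A`
the vector `(λ₁,…,λ_{n−1},R)` belongs to `Γ_k`; by permutation invariance of `Γ_k` the same
holds when any single coordinate of `λ` is replaced by `R`. -/
theorem gammaK_update (n k : ℕ) (hn : 2 ≤ n)
    (A : ℝ) (hA : 0 < A) (lam : Fin n → ℝ) (hlam : lam ∈ GammaK n k)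
    (hsig : -A * esymmF n k lam < esymmF n (k + 1) lam)
    (R : ℝ) (hR : A < R) :
    Function.update lam ⟨n - 1, by omega⟩ R ∈ GammaK n k ∧
    ∀ i : Fin n, Function.update lam i R ∈ GammaK n k := by
  have hupdate : ∀ i : Fin n, Function.update lam i R ∈ GammaK n k := by
    intro i
    have hmap : Finset.univ.val.map lam = lam i ::ₘ (Finset.univ.val.erase i).map lam := by
      simpa using Finset.univ_val_map_update lam i (lam i)
    rw [mem_gammaK_iff, hmap] at hlam
    rw [esymmF_eq_esymm, esymmF_eq_esymm, hmap] at hsig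
    rw [mem_gammaK_iff, Finset.univ_val_map_update]
    exact Multiset.esymm_cons_replace_pos hlam hsig hA hR
  exact ⟨hupdate _, hupdate⟩
end
end

section
/- Let n ≥ 1 and let Γ ⊆ ℝⁿ be an open convex cone with vertex at the origin such that Γ ≠ ℝⁿ, Γ is invariant under permutations of coordinates, and Γ + Γₙ ⊆ Γ where Γₙ = (0,∞)ⁿ is the positive orthant. Then Γ ⊆ Γ₁ := {λ ∈ ℝⁿ : λ₁ + ⋯ + λₙ > 0}; in particular every Γ-admissible C² function is subharmonic. -/
open scoped BigOperators

noncomputable section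

/- Averaging `λ` over all coordinate permutations gives, by convexity and symmetry of `Γ`, the
constant vector `(Σ λᵢ / n, …, Σ λᵢ / n)` in `Γ`. If `Σ λᵢ ≤ 0`, openness pushes a constant vector
with strictly negative entries into `Γ`, and adding positive vectors to its multiples reaches
every point of `ℝⁿ`, contradicting `Γ ≠ ℝⁿ`. -/

open Filter Topology

section SymmetricCone

variable {ι : Type*} {Γ : Set (ι → ℝ)}

theorem sum_perm_apply_eq_sum_perm_apply [Fintype ι] [DecidableEq ι] (x : ι → ℝ) (i j : ι) :
    ∑ σ : Equiv.Perm ι, x (σ i) = ∑ σ : Equiv.Perm ι, x (σ j) :=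
  Fintype.sum_equiv (Equiv.mulRight (Equiv.swap i j)) _ _ fun σ => by simp

theorem sum_sum_perm_apply [Fintype ι] [DecidableEq ι] (x : ι → ℝ) :
    ∑ i, ∑ σ : Equiv.Perm ι, x (σ i) = Fintype.card (Equiv.Perm ι) * ∑ i, x i := by
  rw [Finset.sum_comm]
  simp [Equiv.sum_comp]

theorem sum_perm_apply_eq [Fintype ι] [DecidableEq ι] (x : ι → ℝ) (i : ι) :
    ∑ σ : Equiv.Perm ι, x (σ i) =
      Fintype.card (Equiv.Perm ι) * ((∑ j, x j) / Fintype.card ι) := by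
  have : Nonempty ι := ⟨i⟩
  have hcard : (Fintype.card ι : ℝ) ≠ 0 := Nat.cast_ne_zero.2 Fintype.card_ne_zero
  rw [mul_div_assoc', eq_div_iff hcard, ← sum_sum_perm_apply, mul_comm]
  simp [sum_perm_apply_eq_sum_perm_apply x _ i]

theorem const_sum_div_card_mem [Fintype ι] [DecidableEq ι] (hconv : Convex ℝ Γ)
    (hperm : ∀ x ∈ Γ, ∀ σ : Equiv.Perm ι, x ∘ σ ∈ Γ) {x : ι → ℝ} (hx : x ∈ Γ) :
    (fun _ => (∑ i, x i) / Fintype.card ι) ∈ Γ := by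
  have hN : (0 : ℝ) < Fintype.card (Equiv.Perm ι) := by exact_mod_cast Fintype.card_pos
  have havg : ∑ σ : Equiv.Perm ι, (Fintype.card (Equiv.Perm ι) : ℝ)⁻¹ • (x ∘ σ) ∈ Γ :=
    hconv.sum_mem (fun _ _ => by positivity) (by simp [hN.ne'])
      (fun σ _ => hperm x hx σ)
  convert havg using 1
  funext i
  simp [Finset.sum_apply, ← Finset.mul_sum, sum_perm_apply_eq x i, hN.ne']

theorem exists_forall_neg_mem (hopen : IsOpen Γ) {x : ι → ℝ} (hx : x ∈ Γ)
    (hnonpos : ∀ i, x i ≤ 0) : ∃ y ∈ Γ, ∀ i, y i < 0 := by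
  have hshift : ∀ᶠ ε in 𝓝 (0 : ℝ), (fun i => x i - ε) ∈ Γ := by
    refine (Continuous.tendsto (by fun_prop) (0 : ℝ)).eventually (hopen.mem_nhds ?_)
    simpa using hx
  obtain ⟨ε, hεΓ, hε⟩ := ((hshift.filter_mono nhdsWithin_le_nhds).and
    (self_mem_nhdsWithin : Set.Ioi (0 : ℝ) ∈ 𝓝[>] 0)).exists
  exact ⟨_, hεΓ, fun i => by linarith [hnonpos i, hε]⟩

theorem eq_univ_of_forall_neg_mem [Finite ι]
    (hsmul : ∀ x ∈ Γ, ∀ t : ℝ, 0 < t → t • x ∈ Γ)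
    (hadd : ∀ x ∈ Γ, ∀ τ : ι → ℝ, (∀ i, 0 < τ i) → x + τ ∈ Γ)
    {y : ι → ℝ} (hy : y ∈ Γ) (hneg : ∀ i, y i < 0) : Γ = Set.univ := by
  refine Set.eq_univ_of_forall fun μ => ?_
  have hlarge : ∀ᶠ M in atTop, 0 < M ∧ ∀ i, 0 < μ i - M * y i :=
    (eventually_gt_atTop 0).and <| eventually_all.2 fun i =>
      (eventually_gt_atTop (μ i / y i)).mono fun M hM => by
        have := (div_lt_iff_of_neg (hneg i)).1 hM
        linarith
  obtain ⟨M, hM, hpos⟩ := hlarge.exists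
  simpa using hadd _ (hsmul y hy M hM) (μ - M • y) (by simpa using hpos)

end SymmetricCone

theorem cone_subset_gamma1_general (n : ℕ)
    (Γ : Set (Fin n → ℝ)) (hΓ : IsConvexInvariantCone Γ) :
    (∀ lam ∈ Γ, 0 < ∑ i, lam i) ∧
    (∀ (Ω : Set (EuclideanSpace ℝ (Fin n))) (u : EuclideanSpace ℝ (Fin n) → ℝ),
      ContDiffOn ℝ 2 u Ω → (∀ x ∈ Ω, hessEigen u x ∈ Γ) →
      ∀ x ∈ Ω, 0 < ∑ i, hessEigen u x i) := by
  obtain ⟨hopen, hne, hconv, hsmul, hadd, hperm⟩ := hΓ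
  have hsum_pos : ∀ lam ∈ Γ, 0 < ∑ i, lam i := by
    intro lam hlam
    by_contra! hsum
    obtain ⟨y, hy, hneg⟩ :=
      exists_forall_neg_mem hopen (const_sum_div_card_mem hconv hperm hlam) fun _ =>
        div_nonpos_of_nonpos_of_nonneg hsum (Nat.cast_nonneg _)
    exact hne (eq_univ_of_forall_neg_mem hsmul hadd hy hneg)
  exact ⟨hsum_pos, fun Ω u _ hu x hx => hsum_pos _ (hu x hx)⟩

/-- **Lemma.** Every open convex permutation-invariant cone `Γ ⊊ ℝⁿ` with `Γ + Γₙ ⊆ Γ` is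
contained in the half-space `Γ₁ = {λ : λ₁ + ⋯ + λₙ > 0}`; in particular every `Γ`-admissible
`C²` function is subharmonic (the trace of its Hessian, i.e. the sum of the eigenvalues of
`D²u`, is positive). -/
theorem cone_subset_gamma1 (n : ℕ) (hn : 1 ≤ n)
    (Γ : Set (Fin n → ℝ)) (hΓ : IsConvexInvariantCone Γ) :
    (∀ lam ∈ Γ, 0 < ∑ i, lam i) ∧
    (∀ (Ω : Set (EuclideanSpace ℝ (Fin n))) (u : EuclideanSpace ℝ (Fin n) → ℝ),
      ContDiffOn ℝ 2 u Ω → (∀ x ∈ Ω, hessEigen u x ∈ Γ) →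
      ∀ x ∈ Ω, 0 < ∑ i, hessEigen u x i) :=
  cone_subset_gamma1_general n Γ hΓ
end
end
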